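/- arXiv:1607.07073 — 2 statements merged into one kernel-verified Lean document; each statement's English description precedes it below -/
import Mathlib

section
/- Let G be a strongly connected digraph with a fixed start vertex s, and let S ⊆ V with s ∉ S be a set of vertices such that the induced subgraph G[S] is strongly connected. Then there exists a vertex t such that every vertex w ∈ S having no proper dominator belonging to S satisfies d(w) = t; in other words, S consists of a set of siblings in the dominator tree D of G_s together with some of their descendants in D. -/
/-!  Basic notions for finite directed graphs given by an edge set `E : Set (V × V)`. -/

variable {V : Type*}

/-- A path from `u` to `v`: a nonempty list of vertices starting at `u`, ending at `v`,
in which every pair of consecutive vertices is an edge. -/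
def IsPath (E : Set (V × V)) (u v : V) (p : List V) : Prop :=
  p.Chain' (fun a b => (a, b) ∈ E) ∧ p.head? = some u ∧ p.getLast? = some v

/-- `v` is reachable from `u` by a path. -/
def Reach (E : Set (V × V)) (u v : V) : Prop := ∃ p, IsPath E u v p

/-- Every vertex reaches every other vertex. -/
def StronglyConnected (E : Set (V × V)) : Prop := ∀ u v, Reach E u v

/-- An edge `e` is a strong bridge if its removal destroys strong connectivity. -/
def StrongBridge (E : Set (V × V)) (e : V × V) : Prop :=
  e ∈ E ∧ ¬ StronglyConnected (E \ {e})

/-- `u` dominates `v` in the flow graph with start vertex `s`: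
every path from `s` to `v` contains `u`. -/
def Dominates (E : Set (V × V)) (s u v : V) : Prop :=
  ∀ p, IsPath E s v p → u ∈ p

/-- An edge `e = (e.1, e.2)` is a bridge of the flow graph `G_s`:
every path from `s` to `e.2` contains the edge `e`. -/
def FlowBridge (E : Set (V × V)) (s : V) (e : V × V) : Prop :=
  e ∈ E ∧ ∀ p, IsPath E s e.2 p → [e.1, e.2] <:+: p

/-- The reverse digraph: all edges reversed. -/
def rev (E : Set (V × V)) : Set (V × V) := {e | (e.2, e.1) ∈ E}

/-- `D(v)`: the set of vertices dominated by `v` in `G_s`. -/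
def Dset (E : Set (V × V)) (s v : V) : Set V := {w | Dominates E s v w}

/-- Reachability inside the induced subgraph `G[S]`: a path all of whose vertices lie in `S`. -/
def ReachableIn (E : Set (V × V)) (S : Set V) (u v : V) : Prop :=
  ∃ p, IsPath E u v p ∧ ∀ w ∈ p, w ∈ S

/-- `C` is a strongly connected component of the induced subgraph `G[S]`. -/
def SCCIn (E : Set (V × V)) (S : Set V) (C : Set V) : Prop :=
  C.Nonempty ∧ C ⊆ S ∧
  (∀ u ∈ C, ∀ v ∈ C, ReachableIn E S u v) ∧
  (∀ v ∈ S, ∀ u ∈ C, ReachableIn E S u v → ReachableIn E S v u → v ∈ C)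

/-- A bridge-dominated component: an SCC of `G[D(v)]` for some bridge `(u,v)` of `G_s`. -/
def BridgeDomComponent (E : Set (V × V)) (s : V) (C : Set V) : Prop :=
  ∃ u v, FlowBridge E s (u, v) ∧ SCCIn E (Dset E s v) C

/-- The set of edges used by a path `p`. -/
def pathEdges (p : List V) : Set (V × V) := {e | [e.1, e.2] <:+: p}

/-- `u` and `v` are `2`-edge-connected: there are two edge-disjoint paths from `u` to `v`
and two edge-disjoint paths from `v` to `u`. -/
def TwoEdgeConnected (E : Set (V × V)) (u v : V) : Prop :=
  (∃ p q, IsPath E u v p ∧ IsPath E u v q ∧ pathEdges p ∩ pathEdges q = ∅) ∧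
  (∃ p q, IsPath E v u p ∧ IsPath E v u q ∧ pathEdges p ∩ pathEdges q = ∅)

/-- `u` is the immediate dominator of `v` in `G_s`: a proper dominator of `v`
dominated by every proper dominator of `v`. -/
def ImmDom (E : Set (V × V)) (s u v : V) : Prop :=
  Dominates E s u v ∧ u ≠ v ∧
  ∀ w, Dominates E s w v → w ≠ v → Dominates E s w u

/-- `depth v = |Dom(v)|`, the number of dominators of `v` in `G_s`. -/
noncomputable def depth (E : Set (V × V)) (s v : V) : ℕ :=
  {u | Dominates E s u v}.ncard

/-- `z` is the nearest common ancestor of `x` and `y` in the dominator tree of `G_s`: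
a common dominator of `x` and `y` dominated by every common dominator. -/
def IsNCA (E : Set (V × V)) (s x y z : V) : Prop :=
  Dominates E s z x ∧ Dominates E s z y ∧
  ∀ w, Dominates E s w x → Dominates E s w y → Dominates E s w z

/-- `r` is the bridge-decomposition root of `v` in `G_s`: the deepest dominator `r`
of `v` such that `r = s` or `(d(r), r)` is a bridge of `G_s`. -/
def IsBDRoot (E : Set (V × V)) (s v r : V) : Prop :=
  Dominates E s r v ∧
  (r = s ∨ ∃ u, ImmDom E s u r ∧ FlowBridge E s (u, r)) ∧
  ∀ r', Dominates E s r' v →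
    (r' = s ∨ ∃ u', ImmDom E s u' r' ∧ FlowBridge E s (u', r')) →
    Dominates E s r' r

/-!
A vertex `u ∉ S` that dominates one vertex of `S` dominates all of them, since inside `S`
every vertex of `S` reaches every other one. Fix a vertex `w₀ ∈ S` with no proper dominator
in `S` and let `t = d(w₀)`. Then `t ∉ S`, so `t` dominates every `w ∈ S`; and if `w` has no
proper dominator in `S`, each proper dominator of `w` lies outside `S`, hence dominates `w₀`
and therefore `t`. So `t = d(w)`.
-/

section Paths

variable {E : Set (V × V)} {u v w : V} {p q : List V}

lemma IsPath.ne_nil (h : IsPath E u v p) : p ≠ [] := by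
  rintro rfl; simpa using h.2.1

lemma IsPath.head_mem (h : IsPath E u v p) : u ∈ p := by
  obtain ⟨-, hhead, -⟩ := h
  exact List.mem_of_mem_head? hhead

lemma IsPath.getElem_zero (h : IsPath E u v p) (hp : 0 < p.length) : p[0] = u := by
  simpa [List.head?_eq_getElem?, hp] using h.2.1

lemma IsPath.drop (h : IsPath E u v p) (i : ℕ) (hi : i < p.length) :
    IsPath E p[i] v (p.drop i) := by
  refine ⟨h.1.drop i, by simp [List.head?_drop, List.getElem?_eq_getElem hi], ?_⟩
  rw [← h.2.2, List.getLast?_drop, if_neg (by omega)]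

lemma IsPath.append_tail (hq : IsPath E u v q) (hp : IsPath E v w p) :
    IsPath E u w (q ++ p.tail) := by
  obtain ⟨hc, hh, hl⟩ := hp
  cases p with
  | nil => simp at hh
  | cons x p' =>
    obtain rfl : x = v := by simpa using hh
    cases p' with
    | nil =>
      obtain rfl : x = w := by simpa using hl
      simpa using hq
    | cons y p'' =>
      refine ⟨?_, ?_, ?_⟩
      · refine List.isChain_append.2 ⟨hq.1, hc.tail, ?_⟩
        intro a ha b hb
        rw [hq.2.2, Option.mem_some_iff] at ha
        simp only [List.tail_cons, List.head?_cons, Option.mem_some_iff] at hb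
        subst ha hb
        exact (List.isChain_cons_cons.1 hc).1
      · obtain ⟨a, q', rfl⟩ := List.exists_cons_of_ne_nil hq.ne_nil
        simpa using hq.2.1
      · simp only [List.tail_cons, List.getLast?_append]
        rw [← List.getLast?_cons_cons (a := x), hl]
        simp

end Paths

section Dominators

variable {E : Set (V × V)} {s u w w' : V} {S : Set V}

lemma dominates_start (s v : V) : Dominates E s s v := fun _ hp => hp.head_mem

lemma Dominates.of_reachableIn (hu : Dominates E s u w) (huS : u ∉ S)
    (h : ReachableIn E S w' w) : Dominates E s u w' := by
  intro q hq
  obtain ⟨r, hr, hrS⟩ := h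
  rcases List.mem_append.1 (hu _ (hq.append_tail hr)) with huq | hur
  · exact huq
  · exact absurd (hrS u (List.mem_of_mem_tail hur)) huS

/-- A path `s → p[i] → w` formed from any path to `p[i]` and the rest of `p` must meet
every dominator `u` of `w`, and it cannot meet `u` after position `i`. -/
lemma IsPath.dominates_getElem_of_last {p : List V} (hp : IsPath E s w p) {i : ℕ}
    (hi : i < p.length)
    (hlast : ∀ j (hj : j < p.length), i < j → Dominates E s p[j] w → p[j] = w)
    (hu : Dominates E s u w) (huw : u ≠ w) : Dominates E s u p[i] := by
  intro q hq
  have hqp := hq.append_tail (hp.drop i hi)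
  rw [List.tail_drop] at hqp
  rcases List.mem_append.1 (hu _ hqp) with huq | hup
  · exact huq
  · obtain ⟨m, hm, rfl⟩ := List.getElem_of_mem hup
    rw [List.length_drop] at hm
    rw [List.getElem_drop] at hu huw
    exact absurd (hlast _ (by omega) (by omega) hu) huw

/-- The immediate dominator is the last proper dominator of `w` on any path from `s`. -/
lemma exists_immDom (hreach : Reach E s w) (hsw : s ≠ w) : ∃ t, ImmDom E s t w := by
  classical
  obtain ⟨p, hp⟩ := hreach
  have hlen : 0 < p.length := List.length_pos_iff.2 hp.ne_nil
  let P : ℕ → Prop := fun j => ∃ h : j < p.length, Dominates E s p[j] w ∧ p[j] ≠ w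
  have hP0 : P 0 := ⟨hlen, by rw [hp.getElem_zero hlen]; exact ⟨dominates_start s w, hsw⟩⟩
  obtain ⟨hi, hdom, hne⟩ : P (Nat.findGreatest P p.length) :=
    Nat.findGreatest_spec (Nat.zero_le _) hP0
  refine ⟨_, hdom, hne, fun u hu huw => hp.dominates_getElem_of_last hi ?_ hu huw⟩
  intro j hj hij hjw
  by_contra hne'
  exact absurd (Nat.le_findGreatest (P := P) hj.le ⟨hj, hjw, hne'⟩) (by omega)

end Dominators

/-- if `G[S]` is strongly connected and `s ∉ S`, then there is a vertex
`t` such that every `w ∈ S` with no proper dominator in `S` has immediate dominator `t`;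
i.e. `S` consists of a set of siblings in the dominator tree plus some descendants. -/
theorem stmt11 {V : Type*} (E : Set (V × V)) (s : V) (S : Set V)
    (hSC : StronglyConnected E) (hs : s ∉ S)
    (hS : ∀ u ∈ S, ∀ v ∈ S, ReachableIn E S u v) :
    ∃ t, ∀ w ∈ S, (∀ u ∈ S, Dominates E s u w → u = w) → ImmDom E s t w := by
  by_cases H : ∃ w₀ ∈ S, ∀ u ∈ S, Dominates E s u w₀ → u = w₀
  case neg => exact ⟨s, fun w hw hmin => absurd ⟨w, hw, hmin⟩ H⟩
  obtain ⟨w₀, hw₀S, hmin₀⟩ := H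
  obtain ⟨t, htw₀, htne, htidom⟩ := exists_immDom (hSC s w₀) (fun h => hs (h ▸ hw₀S))
  have htS : t ∉ S := fun h => htne (hmin₀ t h htw₀)
  refine ⟨t, fun w hwS hmin => ⟨htw₀.of_reachableIn htS (hS w hwS w₀ hw₀S),
    fun h => htS (h ▸ hwS), fun u hu huw => ?_⟩⟩
  have huS : u ∉ S := fun h => huw (hmin u h hu)
  exact htidom u (hu.of_reachableIn huS (hS w₀ hw₀S w hwS)) fun h => huS (h ▸ hw₀S)
end

section
/- Let G be a strongly connected digraph whose vertex set is partitioned into sets C_1, C_2, ..., C_k such that each induced subgraph G[C_i] is strongly connected. If (u,v) is a strong bridge of G with u ∈ C_i and v ∈ C_j for i ≠ j, then (u,v) is the unique edge of G from C_i to C_j: every edge (u',v') of G with u' ∈ C_i and v' ∈ C_j satisfies u' = u and v' = v. -/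
/-!  Basic notions for finite directed graphs given by an edge set `E : Set (V × V)`. -/

variable {V : Type*}

/-! A second edge `(u', v')` from `C i` to `C j` would give the detour `u ⇝ u' → v' ⇝ v`
through `G[C i]` and `G[C j]`. Neither induced subgraph contains `(u, v)`, so the detour avoids
it; replacing `(u, v)` by the detour in any path shows that `G - (u, v)` is still strongly
connected. -/

section Paths

variable {E : Set (V × V)}

theorem reach_iff_reflTransGen {u v : V} :
    Reach E u v ↔ Relation.ReflTransGen (fun a b => (a, b) ∈ E) u v := by
  constructor
  · rintro ⟨_ | ⟨a, l⟩, hchain, hhead, hlast⟩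
    · simp at hhead
    · obtain rfl : a = u := by simpa using hhead
      rw [List.getLast?_eq_some_getLast (List.cons_ne_nil _ _), Option.some_inj] at hlast
      exact List.relationReflTransGen_of_exists_isChain_cons l hchain hlast
  · intro h
    obtain ⟨l, hchain, hlast⟩ := List.exists_isChain_cons_of_relationReflTransGen h
    exact ⟨u :: l, hchain, rfl, by rw [List.getLast?_eq_some_getLast (List.cons_ne_nil _ _), hlast]⟩

theorem ReachableIn.reach {S : Set V} {u v : V} (h : ReachableIn E S u v) : Reach E u v :=
  h.elim fun p hp => ⟨p, hp.1⟩

theorem ReachableIn.mono_edges {E' : Set (V × V)} {S : Set V} {u v : V}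
    (hE : ∀ a ∈ S, ∀ b ∈ S, (a, b) ∈ E → (a, b) ∈ E') (h : ReachableIn E S u v) :
    ReachableIn E' S u v := by
  obtain ⟨p, ⟨hchain, hhead, hlast⟩, hS⟩ := h
  exact ⟨p, ⟨hchain.imp_of_mem_imp fun a b ha hb => hE a (hS a ha) b (hS b hb), hhead, hlast⟩, hS⟩

theorem ReachableIn.diff_singleton {S : Set V} {e : V × V} (he : ¬(e.1 ∈ S ∧ e.2 ∈ S))
    {u v : V} (h : ReachableIn E S u v) : ReachableIn (E \ {e}) S u v :=
  h.mono_edges fun _ ha _ hb hab => ⟨hab, fun hae => he (hae ▸ ⟨ha, hb⟩)⟩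

theorem StronglyConnected.diff_singleton {e : V × V} (hE : StronglyConnected E)
    (hdetour : Reach (E \ {e}) e.1 e.2) : StronglyConnected (E \ {e}) := by
  intro x y
  rw [reach_iff_reflTransGen] at hdetour ⊢
  refine Relation.ReflTransGen.lift' id (fun a b hab => ?_) _ _ (reach_iff_reflTransGen.1 (hE x y))
  by_cases hae : (a, b) = e
  · subst hae
    exact hdetour
  · exact .single ⟨hab, hae⟩

theorem StrongBridge.not_reach_diff {e : V × V} (hb : StrongBridge E e)
    (hE : StronglyConnected E) : ¬Reach (E \ {e}) e.1 e.2 :=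
  fun hdetour => hb.2 (hE.diff_singleton hdetour)

end Paths

theorem stmt14_general {V : Type*} {ι : Type*} (E : Set (V × V)) (C : ι → Set V)
    (hSC : StronglyConnected E)
    (hdisj : ∀ i j, i ≠ j → Disjoint (C i) (C j))
    (hCsc : ∀ i, ∀ a ∈ C i, ∀ b ∈ C i, ReachableIn E (C i) a b)
    (u v : V) (i j : ι) (hij : i ≠ j) (hu : u ∈ C i) (hv : v ∈ C j)
    (hb : StrongBridge E (u, v)) :
    ∀ u' v', (u', v') ∈ E → u' ∈ C i → v' ∈ C j → u' = u ∧ v' = v := by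
  intro u' v' he' hu' hv'
  by_contra hne
  have hv_notMem : v ∉ C i := fun h => (hdisj i j hij).notMem_of_mem_right hv h
  have hu_notMem : u ∉ C j := fun h => (hdisj i j hij).notMem_of_mem_left hu h
  have hin_i := (hCsc i u hu u' hu').diff_singleton (e := (u, v)) fun h => hv_notMem h.2
  have hin_j := (hCsc j v' hv' v hv).diff_singleton (e := (u, v)) fun h => hu_notMem h.1
  refine hb.not_reach_diff hSC (reach_iff_reflTransGen.2 ?_)
  exact ((reach_iff_reflTransGen.1 hin_i.reach).tail ⟨he', fun h => hne (Prod.ext_iff.1 h)⟩).trans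
    (reach_iff_reflTransGen.1 hin_j.reach)

/-- if the vertex set is partitioned into sets inducing strongly
connected subgraphs and `(u,v)` is a strong bridge with `u ∈ C i`, `v ∈ C j`, `i ≠ j`,
then `(u,v)` is the unique edge from `C i` to `C j`. -/
theorem stmt14 {V : Type*} {ι : Type*} (E : Set (V × V)) (C : ι → Set V)
    (hSC : StronglyConnected E)
    (hne : ∀ i, (C i).Nonempty)
    (hcover : ∀ x : V, ∃ i, x ∈ C i)
    (hdisj : ∀ i j, i ≠ j → Disjoint (C i) (C j))
    (hCsc : ∀ i, ∀ a ∈ C i, ∀ b ∈ C i, ReachableIn E (C i) a b)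
    (u v : V) (i j : ι) (hij : i ≠ j) (hu : u ∈ C i) (hv : v ∈ C j)
    (hb : StrongBridge E (u, v)) :
    ∀ u' v', (u', v') ∈ E → u' ∈ C i → v' ∈ C j → u' = u ∧ v' = v :=
  stmt14_general E C hSC hdisj hCsc u v i j hij hu hv hb
end
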